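/- Let R be a commutative ring with unity, S = R[x₁,…,x_k], M an S-module, and M̄ = (Mₙ)_{n∈ℕ} an acceptable filtering of M, i.e. an increasing filtering in which each xᵢ has degree 1 and the blow-up Rees(M̄) is finitely generated as an S[y]-module. Then there exists d ∈ ℕ such that: (i) M_d generates M as an S-module; and (ii) for every n ∈ ℕ, M_{n+d} = Sₙ·M_d, where Sₙ is the set of polynomials in S of total degree at most n. (Upward Artin–Rees lemma.) -/

import Mathlib

open scoped ENNReal

/-- A (generalized) length function on the category of `R`-modules, with values in
`ℝ≥0 ∪ {∞} = ℝ≥0∞`: it vanishes on the zero module, is invariant under isomorphism, is additive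
on short exact sequences (equivalently, `λ(M) = λ(N) + λ(M/N)` for every submodule `N ≤ M`), and
is the supremum of its values on finitely generated submodules. -/
structure LengthFunction (R : Type) [CommRing R] : Type 1 where
  l : (M : Type) → [AddCommGroup M] → [Module R M] → ℝ≥0∞
  l_zero : ∀ (M : Type) [AddCommGroup M] [Module R M], Subsingleton M → l M = 0
  l_congr : ∀ (M N : Type) [AddCommGroup M] [Module R M] [AddCommGroup N] [Module R N],
      (M ≃ₗ[R] N) → l M = l N
  l_add : ∀ (M : Type) [AddCommGroup M] [Module R M] (N : Submodule R M),
      l M = l N + l (M ⧸ N)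
  l_fg_sup : ∀ (M : Type) [AddCommGroup M] [Module R M],
      l M = ⨆ (N : Submodule R M) (_ : N.FG), l N

/-- `Sₙ · V`: the `R`-submodule of `M` generated by the products `p • v` with `p ∈ Sₙ` (the
polynomials of total degree at most `n` in `S = R[x₁,…,x_k]`) and `v ∈ V`. -/
def degSmul {R : Type} [CommRing R] (k : ℕ) {M : Type} [AddCommGroup M] [Module R M]
    [Module (MvPolynomial (Fin k) R) M] [IsScalarTower R (MvPolynomial (Fin k) R) M]
    (n : ℕ) (V : Submodule R M) : Submodule R M :=
  Submodule.span R
    {m : M | ∃ p ∈ MvPolynomial.restrictTotalDegree (Fin k) R n, ∃ v ∈ V, p • v = m}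
/-- The ring homomorphism `S[y] → S[X]` (for `S = R[x₁,…,x_k]`) sending `y ↦ X` and
`xᵢ ↦ xᵢ·X^{γᵢ}`; it encodes the action on the blow-up (Rees) module: `xᵢ` acts with degree
`γᵢ` and `y` with degree `1`. -/
noncomputable def twist {R : Type} [CommRing R] {k : ℕ} (γ : Fin k → ℕ) :
    Polynomial (MvPolynomial (Fin k) R) →+* Polynomial (MvPolynomial (Fin k) R) :=
  Polynomial.eval₂RingHom
    (MvPolynomial.eval₂Hom (Polynomial.C.comp MvPolynomial.C)
      (fun i => Polynomial.C (MvPolynomial.X i) * Polynomial.X ^ γ i))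
    Polynomial.X

/-- Auxiliary lemma: the coefficients of `twist γ p` are compatible with any filtration `𝓜`
which is increasing and satisfies `xᵢ • 𝓜 n ⊆ 𝓜 (n + γᵢ)`. -/
theorem twist_coeff_smul_mem {R : Type} [CommRing R] {k : ℕ} {M : Type} [AddCommGroup M]
    [Module R M] [Module (MvPolynomial (Fin k) R) M]
    [IsScalarTower R (MvPolynomial (Fin k) R) M]
    (γ : Fin k → ℕ) (𝓜 : ℕ → Submodule R M) (hmono : Monotone 𝓜)
    (hx : ∀ (i : Fin k) (n : ℕ), ∀ m ∈ 𝓜 n,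
      (MvPolynomial.X i : MvPolynomial (Fin k) R) • m ∈ 𝓜 (n + γ i))
    (p : Polynomial (MvPolynomial (Fin k) R)) :
    ∀ a b : ℕ, ∀ m ∈ 𝓜 b, ((twist γ p).coeff a) • m ∈ 𝓜 (a + b) := by
  classical
  set S := MvPolynomial (Fin k) R
  set T : Set (Polynomial S) :=
    {q | ∀ a b : ℕ, ∀ m ∈ 𝓜 b, (q.coeff a) • m ∈ 𝓜 (a + b)} with hT
  have hadd : ∀ q q' : Polynomial S, q ∈ T → q' ∈ T → q + q' ∈ T := by
    intro q q' hq hq' a b m hm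
    rw [Polynomial.coeff_add, add_smul]
    exact (𝓜 (a + b)).add_mem (hq a b m hm) (hq' a b m hm)
  have hmul : ∀ q q' : Polynomial S, q ∈ T → q' ∈ T → q * q' ∈ T := by
    intro q q' hq hq' a b m hm
    rw [Polynomial.coeff_mul, Finset.sum_smul]
    refine Submodule.sum_mem _ ?_
    intro x hxmem
    rw [mul_smul]
    have h1 : q'.coeff x.2 • m ∈ 𝓜 (x.2 + b) := hq' x.2 b m hm
    have h2 := hq x.1 (x.2 + b) _ h1
    rw [Finset.HasAntidiagonal.mem_antidiagonal] at hxmem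
    rwa [← add_assoc, hxmem] at h2
  have hCC : ∀ r : R, (Polynomial.C (MvPolynomial.C r : S)) ∈ T := by
    intro r a b m hm
    rcases Nat.eq_zero_or_pos a with rfl | ha
    · rw [Polynomial.coeff_C_zero]
      have : (MvPolynomial.C r : S) • m = r • m := by
        rw [← MvPolynomial.algebraMap_eq, algebraMap_smul]
      rw [this, zero_add]
      exact (𝓜 b).smul_mem r hm
    · rw [Polynomial.coeff_C, if_neg (by omega), zero_smul]
      exact (𝓜 (a + b)).zero_mem
  have hX : (Polynomial.X : Polynomial S) ∈ T := by
    intro a b m hm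
    rw [Polynomial.coeff_X]
    by_cases h : (1 : ℕ) = a
    · rw [if_pos h, one_smul]
      exact hmono (by omega) hm
    · rw [if_neg h, zero_smul]
      exact (𝓜 (a + b)).zero_mem
  have hXi : ∀ i : Fin k, (Polynomial.C (MvPolynomial.X i : S) * Polynomial.X ^ γ i) ∈ T := by
    intro i a b m hm
    rw [Polynomial.coeff_C_mul, Polynomial.coeff_X_pow]
    by_cases h : a = γ i
    · rw [if_pos h, mul_one]
      have := hx i b m hm
      rwa [h, add_comm]
    · rw [if_neg h, mul_zero, zero_smul]
      exact (𝓜 (a + b)).zero_mem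
  have hinner : ∀ s : S,
      (MvPolynomial.eval₂Hom (Polynomial.C.comp MvPolynomial.C)
        (fun i => Polynomial.C (MvPolynomial.X i) * Polynomial.X ^ γ i) s) ∈ T := by
    intro s
    induction s using MvPolynomial.induction_on with
    | C r => simpa using hCC r
    | add s s' hs hs' => rw [map_add]; exact hadd _ _ hs hs'
    | mul_X s i hs =>
        rw [map_mul]
        refine hmul _ _ hs ?_
        simpa using hXi i
  suffices h : twist γ p ∈ T by exact h
  induction p using Polynomial.induction_on with
  | C s =>
      show Polynomial.eval₂ _ _ (Polynomial.C s) ∈ T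
      rw [Polynomial.eval₂_C]
      exact hinner s
  | add q q' hq hq' =>
      rw [map_add]; exact hadd _ _ hq hq'
  | monomial n s hq =>
      have : (Polynomial.C s * Polynomial.X ^ (n + 1)) =
          (Polynomial.C s * Polynomial.X ^ n) * Polynomial.X := by ring
      rw [this, map_mul]
      refine hmul _ _ hq ?_
      show Polynomial.eval₂ _ _ Polynomial.X ∈ T
      rw [Polynomial.eval₂_X]
      exact hX

/-- The ambient module `⊕ₙ M yⁿ` of the blow-up construction: the polynomial module
`M[y] = ⊕ₙ M yⁿ` over `S = R[x₁,…,x_k]`, regarded as an `S[y]`-module through `twist γ`, so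
that `xᵢ • (v yʲ) = (xᵢ v) y^{j+γᵢ}` and `y • (v yʲ) = v y^{j+1}`. -/
def ReesAmb (R : Type) [CommRing R] {k : ℕ} (_γ : Fin k → ℕ) (M : Type) [AddCommGroup M]
    [Module R M] [Module (MvPolynomial (Fin k) R) M] : Type :=
  PolynomialModule (MvPolynomial (Fin k) R) M

section Rees
variable {R : Type} [CommRing R] {k : ℕ} {M : Type} [AddCommGroup M] [Module R M]
  [Module (MvPolynomial (Fin k) R) M] [IsScalarTower R (MvPolynomial (Fin k) R) M]

noncomputable instance (γ : Fin k → ℕ) : AddCommGroup (ReesAmb R γ M) :=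
  inferInstanceAs (AddCommGroup (PolynomialModule (MvPolynomial (Fin k) R) M))

/-- The twisted `S[y]`-module structure on `⊕ₙ M yⁿ`. -/
noncomputable instance (γ : Fin k → ℕ) :
    Module (Polynomial (MvPolynomial (Fin k) R)) (ReesAmb R γ M) :=
  Module.compHom (PolynomialModule (MvPolynomial (Fin k) R) M) (twist γ)

noncomputable instance (γ : Fin k → ℕ) : Module R (ReesAmb R γ M) :=
  inferInstanceAs (Module R (PolynomialModule (MvPolynomial (Fin k) R) M))

/-- The underlying finitely supported function `ℕ →₀ M` of an element of `ReesAmb R γ M`;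
`ReesAmb.coe f n` is the coefficient of `yⁿ` in `f`. -/
def ReesAmb.coe {γ : Fin k → ℕ} (f : ReesAmb R γ M) : ℕ →₀ M :=
  (f : PolynomialModule (MvPolynomial (Fin k) R) M).coeff

/-- The blow-up (Rees) module `Rees(M̄) = ⊕ₙ Mₙ yⁿ` of an increasing filtering `M̄ = (Mₙ)ₙ`
with degrees `γ̄`: the `S[y]`-submodule of `ReesAmb R γ M` consisting of the elements whose
`n`-th coefficient lies in `Mₙ` for every `n`. -/
noncomputable def reesSubmodule (γ : Fin k → ℕ) (𝓜 : ℕ → Submodule R M)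
    (hmono : Monotone 𝓜)
    (hx : ∀ (i : Fin k) (n : ℕ), ∀ m ∈ 𝓜 n,
      (MvPolynomial.X i : MvPolynomial (Fin k) R) • m ∈ 𝓜 (n + γ i)) :
    Submodule (Polynomial (MvPolynomial (Fin k) R)) (ReesAmb R γ M) where
  carrier := {f | ∀ n, ReesAmb.coe f n ∈ 𝓜 n}
  zero_mem' := by intro n; exact (𝓜 n).zero_mem
  add_mem' := by
    intro f g hf hg n
    exact (𝓜 n).add_mem (hf n) (hg n)
  smul_mem' := by
    intro p f hf n
    let g : PolynomialModule (MvPolynomial (Fin k) R) M := f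
    have h : ((twist γ p) • g).coeff n ∈ 𝓜 n := by
      rw [PolynomialModule.smul_apply]
      refine Submodule.sum_mem _ ?_
      intro x hxmem
      rw [Finset.HasAntidiagonal.mem_antidiagonal] at hxmem
      have hmem := twist_coeff_smul_mem γ 𝓜 hmono hx p x.1 x.2 (g.coeff x.2) (hf x.2)
      rwa [hxmem] at hmem
    exact h

/-- The `n`-th graded piece `Mₙ yⁿ` of the blow-up module. -/
noncomputable def gradedPiece (γ : Fin k → ℕ) (𝓜 : ℕ → Submodule R M) (n : ℕ) :
    Submodule R (ReesAmb R γ M) :=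
  (𝓜 n).map ((PolynomialModule.coeffLinearEquiv (MvPolynomial (Fin k) R) R).symm.toLinearMap.comp
    (Finsupp.lsingle n : M →ₗ[R] (ℕ →₀ M)))

end Rees

/-! Choose finitely many generators of the Rees module and let `d` bound the powers of `y`
occurring in them. For `m ∈ M_{n+d}`, write `m yⁿ⁺ᵈ = ∑ c_g • g` and compare coefficients of
`yⁿ⁺ᵈ`: `m` becomes a sum of terms `q • v` with `v ∈ M_b`, `b ≤ d`, and `q` of total degree at most
`n + (d - b)`, because `xᵢ` raises the `y`-degree by one. Splitting each monomial of `q` into a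
factor of degree `≤ d - b`, which moves `v` into `M_d`, and a factor of degree `≤ n` shows
`M_{n+d} ⊆ Sₙ · M_d`; the reverse inclusion holds because each `xᵢ` has degree 1, and (i) follows
because the `Mₙ` exhaust `M`. -/

open MvPolynomial

theorem Finsupp.exists_le_degree_le_and_degree_tsub_le {σ : Type*} {α : σ →₀ ℕ} {n e : ℕ}
    (h : α.degree ≤ n + e) : ∃ β ≤ α, β.degree ≤ e ∧ (α - β).degree ≤ n := by
  obtain ⟨β, hβα, hβ⟩ := α.exists_le_degree_eq (α.degree - n) (Nat.sub_le _ _)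
  have hsum : (α - β).degree + β.degree = α.degree := by
    rw [← map_add, tsub_add_cancel_of_le hβα]
  exact ⟨β, hβα, by omega, by omega⟩

theorem Finset.exists_forall_lt_apply_eq_zero {ι M : Type*} [Zero M] (s : Finset ι)
    (f : ι → ℕ →₀ M) : ∃ d, ∀ i ∈ s, ∀ b, d < b → f i b = 0 :=
  ⟨s.sup fun i => (f i).support.sup id, fun _ hi _ hb =>
    Finsupp.notMem_support_iff.1 fun hmem => hb.not_ge <|
      (Finset.le_sup (f := id) hmem).trans (Finset.le_sup (f := fun i => (f i).support.sup id) hi)⟩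

section Filtration

variable {R : Type} [CommRing R] {k : ℕ} {M : Type} [AddCommGroup M] [Module R M]
  [Module (MvPolynomial (Fin k) R) M] {𝓜 : ℕ → Submodule R M}

variable (k) in
abbrev VarsHaveDegreeOne (𝓜 : ℕ → Submodule R M) : Prop :=
  ∀ (i : Fin k) (n : ℕ), ∀ m ∈ 𝓜 n, (X i : MvPolynomial (Fin k) R) • m ∈ 𝓜 (n + 1)

theorem smul_mem_of_forall_monomial_smul_mem [IsScalarTower R (MvPolynomial (Fin k) R) M]
    {N : Submodule R M} {q : MvPolynomial (Fin k) R}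
    {v : M} (h : ∀ α ∈ q.support, monomial α (1 : R) • v ∈ N) : q • v ∈ N := by
  rw [q.as_sum, Finset.sum_smul]
  refine N.sum_mem fun α hα => ?_
  rw [← mul_one (q.coeff α), ← smul_eq_mul, ← smul_monomial, smul_assoc]
  exact N.smul_mem _ (h α hα)

theorem VarsHaveDegreeOne.X_pow_smul_mem (hx : VarsHaveDegreeOne k 𝓜) (i : Fin k) (e : ℕ)
    {b : ℕ} {v : M} (hv : v ∈ 𝓜 b) : (X i ^ e : MvPolynomial (Fin k) R) • v ∈ 𝓜 (b + e) := by
  induction e generalizing b v with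
  | zero => simpa using hv
  | succ e ih =>
    rw [pow_succ, mul_smul, add_comm e 1, ← add_assoc]
    exact ih (hx i b v hv)

theorem VarsHaveDegreeOne.monomial_smul_mem (hx : VarsHaveDegreeOne k 𝓜) (α : Fin k →₀ ℕ)
    {b : ℕ} {v : M} (hv : v ∈ 𝓜 b) : monomial α (1 : R) • v ∈ 𝓜 (b + α.degree) := by
  induction α using Finsupp.induction generalizing b v with
  | zero => simpa using hv
  | single_add i e β _ _ ih =>
    rw [← one_mul (1 : R), ← monomial_mul, ← X_pow_eq_monomial, mul_smul, map_add,
      Finsupp.degree_single, add_comm e, ← add_assoc]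
    exact hx.X_pow_smul_mem i e (ih hv)

theorem VarsHaveDegreeOne.smul_mem [IsScalarTower R (MvPolynomial (Fin k) R) M]
    (hmono : Monotone 𝓜) (hx : VarsHaveDegreeOne k 𝓜)
    {q : MvPolynomial (Fin k) R} {n b : ℕ} (hq : q.totalDegree ≤ n) {v : M} (hv : v ∈ 𝓜 b) :
    q • v ∈ 𝓜 (b + n) :=
  smul_mem_of_forall_monomial_smul_mem fun α hα =>
    hmono (le_totalDegree hα |>.trans hq |> (Nat.add_le_add_left · b)) (hx.monomial_smul_mem α hv)

theorem VarsHaveDegreeOne.degSmul_le [IsScalarTower R (MvPolynomial (Fin k) R) M]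
    (hmono : Monotone 𝓜) (hx : VarsHaveDegreeOne k 𝓜) (n d : ℕ) :
    degSmul k n (𝓜 d) ≤ 𝓜 (n + d) :=
  Submodule.span_le.2 <| by
    rintro _ ⟨p, hp, v, hv, rfl⟩
    exact add_comm d n ▸ hx.smul_mem hmono ((mem_restrictTotalDegree _ _ _).1 hp) hv

theorem VarsHaveDegreeOne.smul_mem_degSmul [IsScalarTower R (MvPolynomial (Fin k) R) M]
    (hmono : Monotone 𝓜) (hx : VarsHaveDegreeOne k 𝓜) {n b e d : ℕ} (hbe : b + e ≤ d)
    {q : MvPolynomial (Fin k) R} (hq : q.totalDegree ≤ n + e) {v : M} (hv : v ∈ 𝓜 b) :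
    q • v ∈ degSmul k n (𝓜 d) :=
  smul_mem_of_forall_monomial_smul_mem fun α hα => by
    obtain ⟨β, hβα, hβ, hαβ⟩ :=
      Finsupp.exists_le_degree_le_and_degree_tsub_le ((le_totalDegree hα).trans hq)
    rw [← tsub_add_cancel_of_le hβα, ← one_mul (1 : R), ← monomial_mul, mul_smul]
    exact Submodule.subset_span ⟨_, (mem_restrictTotalDegree _ _ _).2
      ((totalDegree_monomial_le _ _).trans hαβ), _,
      hmono (by omega) (hx.monomial_smul_mem β hv), rfl⟩

end Filtration

theorem totalDegree_twist_coeff_le {R : Type} [CommRing R] {k : ℕ}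
    (p : Polynomial (MvPolynomial (Fin k) R)) (a : ℕ) :
    ((twist (fun _ => 1) p).coeff a).totalDegree ≤ a := by
  have hmono : Monotone (restrictTotalDegree (Fin k) R) := fun m n hmn q hq =>
    (mem_restrictTotalDegree _ _ _).2 (((mem_restrictTotalDegree _ _ _).1 hq).trans hmn)
  have hX : VarsHaveDegreeOne k (restrictTotalDegree (Fin k) R) := fun i n q hq => by
    rw [mem_restrictTotalDegree] at hq ⊢
    have : (X i : MvPolynomial (Fin k) R).totalDegree ≤ 1 :=
      (totalDegree_monomial_le _ _).trans (by simp)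
    exact (totalDegree_mul _ _).trans (by omega)
  -- the total-degree filtration of `S` itself, tested on `m = 1`
  simpa [mem_restrictTotalDegree] using twist_coeff_smul_mem (M := MvPolynomial (Fin k) R) _ _
    hmono hX p a 0 1 ((mem_restrictTotalDegree _ _ _).2 (by simp))

theorem degSmul_le_span {R : Type} [CommRing R] {k : ℕ} {M : Type} [AddCommGroup M]
    [Module R M] [Module (MvPolynomial (Fin k) R) M] [IsScalarTower R (MvPolynomial (Fin k) R) M]
    (n : ℕ) (V : Submodule R M) :
    degSmul k n V ≤ (Submodule.span (MvPolynomial (Fin k) R) (V : Set M)).restrictScalars R :=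
  Submodule.span_le.2 <| by
    rintro _ ⟨p, -, v, hv, rfl⟩
    exact Submodule.smul_mem _ p (Submodule.subset_span hv)

section ReesModule

variable {R : Type} [CommRing R] {k : ℕ} {M : Type} [AddCommGroup M] [Module R M]
  [Module (MvPolynomial (Fin k) R) M] {𝓜 : ℕ → Submodule R M}

theorem ReesAmb.coe_smul {γ : Fin k → ℕ} (p : Polynomial (MvPolynomial (Fin k) R))
    (f : ReesAmb R γ M) (n : ℕ) :
    ReesAmb.coe (p • f) n =
      ∑ x ∈ Finset.HasAntidiagonal.antidiagonal n, (twist γ p).coeff x.1 • ReesAmb.coe f x.2 :=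
  PolynomialModule.smul_apply (twist γ p) (f : PolynomialModule (MvPolynomial (Fin k) R) M) n

theorem ReesAmb.coe_sum {γ : Fin k → ℕ} {ι : Type*} (s : Finset ι) (f : ι → ReesAmb R γ M) :
    ReesAmb.coe (∑ i ∈ s, f i) = ∑ i ∈ s, ReesAmb.coe (f i) :=
  PolynomialModule.coeff_sum s f

theorem ReesAmb.coe_smul_mem_degSmul [IsScalarTower R (MvPolynomial (Fin k) R) M]
    (hmono : Monotone 𝓜) (hx : VarsHaveDegreeOne k 𝓜)
    {g : ReesAmb R (fun _ : Fin k => 1) M} (hg : ∀ b, ReesAmb.coe g b ∈ 𝓜 b) {d : ℕ}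
    (hgd : ∀ b, d < b → ReesAmb.coe g b = 0) (c : Polynomial (MvPolynomial (Fin k) R)) (n : ℕ) :
    ReesAmb.coe (c • g : ReesAmb R (fun _ : Fin k => 1) M) (n + d) ∈ degSmul k n (𝓜 d) := by
  rw [ReesAmb.coe_smul]
  refine Submodule.sum_mem _ fun x hx' => ?_
  rw [Finset.HasAntidiagonal.mem_antidiagonal] at hx'
  rcases le_or_gt x.2 d with hb | hb
  · exact hx.smul_mem_degSmul hmono (e := d - x.2) (by omega)
      ((totalDegree_twist_coeff_le _ _).trans (by omega)) (hg _)
  · rw [hgd _ hb, smul_zero]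
    exact Submodule.zero_mem _

theorem le_degSmul_of_span_eq_top [IsScalarTower R (MvPolynomial (Fin k) R) M]
    (hmono : Monotone 𝓜) (hx : VarsHaveDegreeOne k 𝓜)
    {s : Finset (reesSubmodule (fun _ => 1) 𝓜 hmono hx)}
    (hs : Submodule.span (Polynomial (MvPolynomial (Fin k) R))
      (s : Set (reesSubmodule (fun _ => 1) 𝓜 hmono hx)) = ⊤) {d : ℕ}
    (hd : ∀ g ∈ s, ∀ b, d < b → ReesAmb.coe (g : ReesAmb R (fun _ : Fin k => 1) M) b = 0)
    (n : ℕ) : 𝓜 (n + d) ≤ degSmul k n (𝓜 d) := by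
  intro m hm
  let f : reesSubmodule (fun _ => 1) 𝓜 hmono hx :=
    ⟨PolynomialModule.single _ (n + d) m, fun j => by
      change Finsupp.single (n + d) m j ∈ 𝓜 j
      rw [Finsupp.single_apply]
      split_ifs with h
      · exact h ▸ hm
      · exact zero_mem _⟩
  obtain ⟨c, -, hc⟩ := Submodule.mem_span_finset.1 (hs ▸ Submodule.mem_top : f ∈ _)
  have hm : m = ReesAmb.coe (f : ReesAmb R (fun _ : Fin k => 1) M) (n + d) :=
    (Finsupp.single_eq_same).symm
  rw [hm, ← hc, Submodule.coe_sum, ReesAmb.coe_sum, Finsupp.finsetSum_apply]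
  exact Submodule.sum_mem _ fun g hg =>
    ReesAmb.coe_smul_mem_degSmul hmono hx g.2 (hd g hg) (c g) n

end ReesModule

/-- upward Artin–Rees: Let `R` be a commutative ring, `S = R[x₁,…,x_k]`, `M` an
`S`-module, and `M̄ = (Mₙ)ₙ` an acceptable filtering of `M`: an increasing filtering in which
each `xᵢ` has degree `1` and whose blow-up `Rees(M̄)` is finitely generated as an
`S[y]`-module.  Then there is `d ∈ ℕ` such that (i) `M_d` generates `M` as an `S`-module, and
(ii) for every `n`, `M_{n+d} = Sₙ · M_d` (with `Sₙ` the polynomials of total degree `≤ n`). -/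
theorem stmt_3 {R : Type} [CommRing R] {k : ℕ} {M : Type} [AddCommGroup M] [Module R M]
    [Module (MvPolynomial (Fin k) R) M] [IsScalarTower R (MvPolynomial (Fin k) R) M]
    (𝓜 : ℕ → Submodule R M)
    (hmono : Monotone 𝓜) (hexh : (⨆ n, 𝓜 n) = ⊤)
    (hx : ∀ (i : Fin k) (n : ℕ), ∀ m ∈ 𝓜 n,
      (MvPolynomial.X i : MvPolynomial (Fin k) R) • m ∈ 𝓜 (n + 1))
    (hfg : Module.Finite (Polynomial (MvPolynomial (Fin k) R))
      (reesSubmodule (fun _ => 1) 𝓜 hmono hx)) :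
    ∃ d : ℕ,
      Submodule.span (MvPolynomial (Fin k) R) ((𝓜 d : Submodule R M) : Set M) = ⊤ ∧
      ∀ n : ℕ, 𝓜 (n + d) = degSmul k n (𝓜 d) := by
  obtain ⟨s, hs⟩ := hfg.fg_top
  obtain ⟨d, hd⟩ := s.exists_forall_lt_apply_eq_zero fun g => ReesAmb.coe g.1
  have hstable : ∀ n, 𝓜 (n + d) = degSmul k n (𝓜 d) := fun n =>
    le_antisymm (le_degSmul_of_span_eq_top hmono hx hs hd n)
      (VarsHaveDegreeOne.degSmul_le hmono hx n d)
  refine ⟨d, eq_top_iff.2 fun m _ => ?_, hstable⟩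
  obtain ⟨j, hj⟩ := (Submodule.mem_iSup_of_directed _ hmono.directed_le).1
    (hexh ▸ Submodule.mem_top : m ∈ ⨆ n, 𝓜 n)
  exact degSmul_le_span j (𝓜 d) (hstable j ▸ hmono (j.le_add_right d) hj)
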